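/- Let n > k ≥ 4 be integers. Then the minimum number of edges over all W_k-saturated graphs on n vertices that contain a vertex of degree n − 1 equals (n − 1) + sat(n − 1, C_k). -/

import Mathlib

open SimpleGraph

/-- `G` contains a copy of `F`, i.e. a subgraph isomorphic to `F`. -/
def HasCopy {V W : Type*} (F : SimpleGraph V) (G : SimpleGraph W) : Prop :=
  ∃ f : F →g G, Function.Injective f

/-- `G` is `F`-free: `G` contains no subgraph isomorphic to `F`. -/
def IsFree {V W : Type*} (F : SimpleGraph V) (G : SimpleGraph W) : Prop :=
  ¬ HasCopy F G

/-- `G` is `F`-semi-saturated: for every pair of non-adjacent vertices `u ≠ v`,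
the graph `G + uv` contains a copy of `F` using the edge `uv`. -/
def IsSemiSat {V W : Type*} (F : SimpleGraph V) (G : SimpleGraph W) : Prop :=
  ∀ u v : W, u ≠ v → ¬ G.Adj u v →
    ∃ f : F →g (G ⊔ fromEdgeSet {s(u, v)}), Function.Injective f ∧
      ∃ a b : V, F.Adj a b ∧ f a = u ∧ f b = v

/-- `G` is `F`-saturated: `F`-free and `F`-semi-saturated. -/
def IsSat {V W : Type*} (F : SimpleGraph V) (G : SimpleGraph W) : Prop :=
  IsFree F G ∧ IsSemiSat F G

/-- The join `G ∨ H` of two graphs. -/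
def graphJoin {V W : Type*} (G : SimpleGraph V) (H : SimpleGraph W) :
    SimpleGraph (V ⊕ W) where
  Adj x y :=
    match x, y with
    | Sum.inl a, Sum.inl b => G.Adj a b
    | Sum.inr a, Sum.inr b => H.Adj a b
    | Sum.inl _, Sum.inr _ => True
    | Sum.inr _, Sum.inl _ => True
  symm := ⟨by rintro (a | a) (b | b) h <;> first | exact G.symm h | exact H.symm h | exact G.adj_symm h | exact H.adj_symm h | trivial⟩
  loopless := ⟨by rintro (a | a) h <;> first | exact G.loopless a h | exact H.loopless a h | exact G.irrefl h | exact H.irrefl h⟩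

/-- The wheel `W_k = K_1 ∨ C_k`. -/
def wheel (k : ℕ) : SimpleGraph (Unit ⊕ Fin k) :=
  graphJoin (⊥ : SimpleGraph Unit) (cycleGraph k)

/-- `sat(n, F)`: the minimum number of edges in an `F`-saturated graph on `n` vertices. -/
noncomputable def satNumber {V : Type*} (F : SimpleGraph V) (n : ℕ) : ℕ :=
  sInf { m | ∃ G : SimpleGraph (Fin n), IsSat F G ∧ G.edgeSet.ncard = m }

/-- `ssat(n, F)`: the minimum number of edges in an `F`-semi-saturated graph on `n` vertices. -/
noncomputable def ssatNumber {V : Type*} (F : SimpleGraph V) (n : ℕ) : ℕ :=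
  sInf { m | ∃ G : SimpleGraph (Fin n), IsSemiSat F G ∧ G.edgeSet.ncard = m }

/-!
A graph on `n` vertices with a vertex of degree `n - 1` is the cone `K_1 ∨ H` over the graph `H`
on the other `n - 1` vertices, and has `(n - 1) + e(H)` edges. The cone over `H` is
`W_k = K_1 ∨ C_k`-saturated exactly when `H` is `C_k`-saturated: the non-edges of the cone are
the non-edges of `H`, and a copy of a cone `K_1 ∨ F` inside `K_1 ∨ H` always yields a copy of
`F` inside `H`.
-/

section Transport

variable {U V V' : Type*} {F : SimpleGraph U} {G : SimpleGraph V} {G' : SimpleGraph V'}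

lemma HasCopy.of_iso (e : G ≃g G') : HasCopy F G → HasCopy F G' := fun ⟨f, hf⟩ =>
  ⟨e.toHom.comp f, e.injective.comp hf⟩

def SimpleGraph.Iso.supEdge (e : G ≃g G') (u v : V') :
    G ⊔ fromEdgeSet {s(e.symm u, e.symm v)} ≃g G' ⊔ fromEdgeSet {s(u, v)} where
  toEquiv := e.toEquiv
  map_rel_iff' {x y} := by
    change (G' ⊔ _).Adj (e x) (e y) ↔ _
    simp only [sup_adj, fromEdgeSet_adj, Set.mem_singleton_iff, Sym2.eq_iff, e.map_adj_iff,
      RelIso.eq_symm_apply, e.injective.ne_iff]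

lemma IsSemiSat.of_iso (e : G ≃g G') (h : IsSemiSat F G) : IsSemiSat F G' := by
  intro u v huv hnadj
  obtain ⟨f, hf, a, b, hab, hfa, hfb⟩ :=
    h (e.symm u) (e.symm v) (e.symm.injective.ne huv) (by rwa [← e.symm.map_adj_iff] at hnadj)
  exact ⟨(e.supEdge u v).toHom.comp f, (e.supEdge u v).injective.comp hf, a, b, hab,
    e.eq_symm_apply.1 hfa, e.eq_symm_apply.1 hfb⟩

lemma isSat_congr_right (e : G ≃g G') : IsSat F G ↔ IsSat F G' :=
  ⟨fun ⟨hfree, hsemi⟩ => ⟨mt (HasCopy.of_iso e.symm) hfree, hsemi.of_iso e⟩,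
    fun ⟨hfree, hsemi⟩ => ⟨mt (HasCopy.of_iso e) hfree, hsemi.of_iso e.symm⟩⟩

lemma SimpleGraph.Iso.ncard_edgeSet_eq (e : G ≃g G') : G.edgeSet.ncard = G'.edgeSet.ncard := by
  rw [← Nat.card_coe_set_eq, ← Nat.card_coe_set_eq]
  exact Nat.card_congr e.mapEdgeSet

end Transport

section Saturation

variable {U V : Type*} {F : SimpleGraph U} {G : SimpleGraph V}

lemma IsFree.exists_adj_of_copy_sup_edge (hG : IsFree F G) {u v : V}
    (f : F →g G ⊔ fromEdgeSet {s(u, v)}) (hf : Function.Injective f) :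
    ∃ a b, F.Adj a b ∧ f a = u ∧ f b = v := by
  by_contra! hmiss
  refine hG ⟨⟨f, fun {a b} hab => ?_⟩, hf⟩
  rcases (sup_adj _ _ _ _).1 (f.map_adj hab) with h | ⟨huv, -⟩
  · exact h
  · rcases Sym2.eq_iff.1 (Set.mem_singleton_iff.1 huv) with ⟨ha, hb⟩ | ⟨ha, hb⟩
    · exact absurd hb (hmiss a b hab ha)
    · exact absurd ha (hmiss b a hab.symm hb)

lemma IsFree.isSat (hG : IsFree F G)
    (h : ∀ u v, u ≠ v → ¬ G.Adj u v → HasCopy F (G ⊔ fromEdgeSet {s(u, v)})) : IsSat F G :=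
  ⟨hG, fun u v huv hnadj =>
    let ⟨f, hf⟩ := h u v huv hnadj
    ⟨f, hf, hG.exists_adj_of_copy_sup_edge f hf⟩⟩

lemma isFree_bot_of_adj {a b : U} (hab : F.Adj a b) : IsFree F (⊥ : SimpleGraph V) :=
  fun ⟨f, _⟩ => f.map_adj hab

lemma exists_isSat_of_adj [Finite V] {a b : U} (hab : F.Adj a b) :
    ∃ G : SimpleGraph V, IsSat F G := by
  obtain ⟨G, -, hG⟩ := Finite.exists_le_maximal (p := IsFree F) (isFree_bot_of_adj (V := V) hab)
  refine ⟨G, hG.prop.isSat fun u v huv hnadj => ?_⟩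
  by_contra hfree
  exact hnadj (hG.2 hfree le_sup_left ((sup_adj _ _ _ _).2 (Or.inr ⟨rfl, huv⟩)))

end Saturation

section Cone

variable {U V W : Type*} {F : SimpleGraph U} {H : SimpleGraph W}

/-- The cone `K_1 ∨ H`, with apex `Sum.inl ()`; `wheel k` is `cone (cycleGraph k)` by definition. -/
abbrev cone (H : SimpleGraph W) : SimpleGraph (Unit ⊕ W) :=
  graphJoin ⊥ H

@[simp] lemma cone_adj_inl_inl {x y : Unit} : ¬ (cone H).Adj (.inl x) (.inl y) := id

@[simp] lemma cone_adj_inl_inr {x : Unit} {b : W} : (cone H).Adj (.inl x) (.inr b) := trivial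

@[simp] lemma cone_adj_inr_inl {a : W} {y : Unit} : (cone H).Adj (.inr a) (.inl y) := trivial

@[simp] lemma cone_adj_inr_inr {a b : W} : (cone H).Adj (.inr a) (.inr b) ↔ H.Adj a b := Iff.rfl

lemma cone_isUniversal_apex : (cone H).IsUniversal (.inl ()) := by
  rintro (_ | b) hne
  · exact absurd rfl hne
  · exact cone_adj_inl_inr

lemma cone_sup_edge (a b : W) :
    cone (H ⊔ fromEdgeSet {s(a, b)}) = cone H ⊔ fromEdgeSet {s(.inr a, .inr b)} := by
  ext (_ | x) (_ | y) <;> simp [fromEdgeSet_adj]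

def coneMap (f : F →g H) : cone F →g cone H where
  toFun := Sum.map id f
  map_rel' {x y} hxy := by
    rcases x with _ | x <;> rcases y with _ | y
    · exact absurd hxy cone_adj_inl_inl
    · exact cone_adj_inl_inr
    · exact cone_adj_inr_inl
    · exact f.map_adj hxy

lemma coneMap_injective {f : F →g H} (hf : Function.Injective f) :
    Function.Injective (coneMap f) :=
  Sum.map_injective.2 ⟨Function.injective_id, hf⟩

lemma hasCopy_of_map_ne_apex (g : U → Unit ⊕ W)
    (hadj : ∀ {a b}, F.Adj a b → (cone H).Adj (g a) (g b)) (hg : Function.Injective g)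
    (hapex : ∀ a, g a ≠ .inl ()) : HasCopy F H := by
  have hright : ∀ a, ∃ w, g a = .inr w := fun a => by
    rcases hga : g a with _ | w
    · exact absurd hga (hapex a)
    · exact ⟨w, rfl⟩
  choose w hw using hright
  refine ⟨⟨w, fun {a b} hab => ?_⟩, fun a b hab => hg ?_⟩
  · simpa only [hw, cone_adj_inr_inr] using hadj hab
  · rw [hw, hw]
    exact congrArg Sum.inr hab

/-- A copy of `cone F` in `cone H` may use the apex of `cone H` for a vertex of `F`; that
vertex is then moved to the image of the apex of `cone F`, which is adjacent to the images of
all vertices of `F`. -/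
lemma hasCopy_cone_iff : HasCopy (cone F) (cone H) ↔ HasCopy F H := by
  classical
  refine ⟨fun ⟨f, hf⟩ => ?_, fun ⟨f, hf⟩ => ⟨coneMap f, coneMap_injective hf⟩⟩
  have hne : ∀ a, f (.inl ()) ≠ f (.inr a) := fun a h => Sum.inl_ne_inr (hf h)
  refine hasCopy_of_map_ne_apex (fun a => if f (.inr a) = .inl () then f (.inl ()) else f (.inr a))
    (fun {a b} hab => ?_) (fun a b hab => ?_) (fun a => ?_)
  · have hfab : (cone H).Adj (f (.inr a)) (f (.inr b)) := f.map_adj hab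
    split_ifs with ha hb hb
    · exact absurd (ha.trans hb.symm) hfab.ne
    · exact f.map_adj cone_adj_inl_inr
    · exact f.map_adj cone_adj_inr_inl
    · exact hfab
  · dsimp only at hab
    split_ifs at hab with ha hb hb
    · exact Sum.inr_injective (hf (ha.trans hb.symm))
    · exact absurd hab (hne b)
    · exact absurd hab.symm (hne a)
    · exact Sum.inr_injective (hf hab)
  · split_ifs with ha
    · exact ha ▸ hne a
    · exact ha

lemma isSat_cone_iff : IsSat (cone F) (cone H) ↔ IsSat F H := by
  refine ⟨fun hC => ?_, fun hS => ?_⟩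
  · have hfree : IsFree F H := mt hasCopy_cone_iff.2 hC.1
    refine hfree.isSat fun a b hab hnadj => ?_
    obtain ⟨f, hf, -⟩ := hC.2 (.inr a) (.inr b) (Sum.inr_injective.ne hab) (by simpa using hnadj)
    exact hasCopy_cone_iff.1 (cone_sup_edge (H := H) a b ▸ ⟨f, hf⟩)
  · refine ⟨mt hasCopy_cone_iff.1 hS.1, ?_⟩
    rintro (_ | a) (_ | b) hne hnadj
    · exact absurd rfl hne
    · exact absurd cone_adj_inl_inr hnadj
    · exact absurd cone_adj_inr_inl hnadj
    · obtain ⟨f, hf, c, d, hcd, hfc, hfd⟩ :=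
        hS.2 a b (fun h => hne (congrArg _ h)) (by simpa using hnadj)
      rw [← cone_sup_edge]
      exact ⟨coneMap f, coneMap_injective hf, .inr c, .inr d, hcd, congrArg _ hfc,
        congrArg _ hfd⟩

lemma ncard_edgeSet_cone [Finite W] (H : SimpleGraph W) :
    (cone H).edgeSet.ncard = Nat.card W + H.edgeSet.ncard := by
  have hsplit : (cone H).edgeSet =
      Set.range (fun w => s(.inl (), .inr w)) ∪ Sym2.map .inr '' H.edgeSet := by
    ext z
    induction z using Sym2.ind with
    | _ x y =>
      rcases x with _ | x <;> rcases y with _ | y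
      · simp [Sym2.forall]
      · simp
      · simp
      · rw [← Sym2.map_mk, Set.mem_union,
          (Sym2.map.injective Sum.inr_injective).mem_set_image]
        simp
  have hdisj : Disjoint (Set.range (fun w : W => s((.inl () : Unit ⊕ W), .inr w)))
      (Sym2.map .inr '' H.edgeSet) := by
    simp [Set.disjoint_left, Sym2.forall]
  rw [hsplit, Set.ncard_union_eq hdisj,
    Set.ncard_range_of_injective (by simp [Function.Injective]),
    Set.ncard_image_of_injective _ (Sym2.map.injective Sum.inr_injective)]

end Cone

section Conical

variable {U V W : Type*} {G : SimpleGraph V}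

lemma ncard_neighborSet_eq_card_sub_one_iff [Finite V] {v : V} :
    (G.neighborSet v).ncard = Nat.card V - 1 ↔ G.IsUniversal v := by
  have hcompl : ({v}ᶜ : Set V).ncard = Nat.card V - 1 := by
    rw [Set.ncard_compl, Set.ncard_singleton]
  rw [← neighborSet_eq_compl_singleton, ← hcompl]
  exact ⟨fun h => Set.eq_of_subset_of_ncard_le (G.neighborSet_subset_compl v) h.ge,
    fun h => h ▸ rfl⟩

def coneIsoOfIsUniversal (φ : Unit ⊕ W ≃ V) (hu : G.IsUniversal (φ (.inl ()))) :
    cone (G.comap (φ ∘ .inr)) ≃g G where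
  toEquiv := φ
  map_rel_iff' {x y} := by
    rcases x with ⟨⟩ | x <;> rcases y with ⟨⟩ | y
    · simp
    · simpa using hu (φ.injective.ne Sum.inl_ne_inr)
    · simpa using (hu (φ.injective.ne Sum.inl_ne_inr)).symm
    · rfl

lemma SimpleGraph.IsUniversal.exists_iso_cone (φ : Unit ⊕ W ≃ V) {u : V} (hu : G.IsUniversal u) :
    ∃ H : SimpleGraph W, Nonempty (cone H ≃g G) := by
  classical
  let ψ := φ.trans (Equiv.swap (φ (.inl ())) u)
  exact ⟨_, ⟨coneIsoOfIsUniversal ψ (by simpa [ψ] using hu)⟩⟩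

lemma edgeCounts_isSat_cone_with_universal [Finite W] (F : SimpleGraph U) (φ : Unit ⊕ W ≃ V) :
    { m | ∃ G : SimpleGraph V, IsSat (cone F) G ∧ (∃ u, G.IsUniversal u) ∧ G.edgeSet.ncard = m }
      = (Nat.card W + ·) '' { m | ∃ H : SimpleGraph W, IsSat F H ∧ H.edgeSet.ncard = m } := by
  ext m
  constructor
  · rintro ⟨G, hG, ⟨u, hu⟩, rfl⟩
    obtain ⟨H, ⟨e⟩⟩ := hu.exists_iso_cone φ
    exact ⟨_, ⟨H, isSat_cone_iff.1 ((isSat_congr_right e).2 hG), rfl⟩,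
      by rw [← e.ncard_edgeSet_eq, ncard_edgeSet_cone]⟩
  · rintro ⟨_, ⟨H, hH, rfl⟩, rfl⟩
    let e := Iso.comap φ.symm (cone H)
    refine ⟨_, (isSat_congr_right e).2 (isSat_cone_iff.2 hH), ⟨φ (.inl ()), fun w hw => ?_⟩,
      by rw [e.ncard_edgeSet_eq, ncard_edgeSet_cone]⟩
    simpa using cone_isUniversal_apex (H := H) fun h => hw (φ.eq_symm_apply.1 h)

end Conical

lemma Nat.sInf_image_const_add {s : Set ℕ} (hs : s.Nonempty) (a : ℕ) :
    sInf ((a + ·) '' s) = a + sInf s :=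
  (Monotone.map_csInf_of_continuousAt continuous_of_discreteTopology.continuousAt
    (fun _ _ h => Nat.add_le_add_left h a) hs).symm

/-- For `n > k ≥ 4`, the minimum number of edges of a `W_k`-saturated graph on `n`
vertices having a vertex of degree `n - 1` equals `(n - 1) + sat(n - 1, C_k)`. -/
theorem sat_wheel_conical (k n : ℕ) (hk : 4 ≤ k) (hn : k < n) :
    sInf { m | ∃ G : SimpleGraph (Fin n), IsSat (wheel k) G ∧
        (∃ u : Fin n, (G.neighborSet u).ncard = n - 1) ∧ G.edgeSet.ncard = m }
      = (n - 1) + satNumber (cycleGraph k) (n - 1) := by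
  obtain ⟨φ⟩ : Nonempty (Unit ⊕ Fin (n - 1) ≃ Fin n) := Fintype.card_eq.1 (by
    simp only [Fintype.card_sum, Fintype.card_unit, Fintype.card_fin]; omega)
  have huniv (G : SimpleGraph (Fin n)) (u : Fin n) :
      (G.neighborSet u).ncard = n - 1 ↔ G.IsUniversal u := by
    simpa using ncard_neighborSet_eq_card_sub_one_iff (G := G) (v := u)
  obtain ⟨j, rfl⟩ : ∃ j, k = j + 2 := ⟨k - 2, by omega⟩
  have hcycle : (cycleGraph (j + 2)).Adj 1 0 := cycleGraph_adj.2 (.inl (sub_zero 1))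
  obtain ⟨H, hH⟩ := exists_isSat_of_adj (V := Fin (n - 1)) hcycle
  simp_rw [huniv]
  rw [wheel, ← cone, edgeCounts_isSat_cone_with_universal _ φ, Nat.card_fin,
    Nat.sInf_image_const_add, satNumber]
  exact ⟨_, H, hH, rfl⟩
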